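/- arXiv:2008.13055 — 3 statements merged into one kernel-verified Lean document; each statement's English description precedes it below -/
import Mathlib

section
/- Let R = ℂ[x_0,…,x_n] be a polynomial ring, let I ⊆ R be an ideal, and let w ∈ ℤ^{n+1} be a weight. Then the quotient ring R[t]/J is flat as a module over the polynomial ring ℂ[t], where J ⊆ R[t] is the ideal generated by {f_t : f ∈ I, f ≠ 0}; moreover, the image of J under the evaluation homomorphism R[t] → R sending t ↦ 0 equals the initial ideal I_w := span{f_w : f ∈ I, f ≠ 0}, while its image under t ↦ 1 equals I. (This is the flatness of the weight degeneration 𝒳^w → ℂ_t, whose fiber at t = 0 is the scheme with ideal I_w.) -/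
/-!
Give `x^α t^j` the weight `w·α - j`. Then `f_t` is homogeneous of weight `w(f)`, and a homogeneous
`G` of weight `d` with `G(1) = g` equals `t^(w(g) - d) g_t`. Hence `F ∈ J` iff for every `d` the
weight-`d` part of `F`, evaluated at `t = 1`, lies in `I`. Multiplying `F` by `p ∈ ℂ[t]` turns
this sequence `(u_d)` into `(∑ⱼ pⱼ u_{d+j})`; since `u_d = 0` for large `d`, a downward induction
isolating the trailing coefficient of `p` shows that `R[t]/J` is torsion-free, hence flat over the
principal ideal domain `ℂ[t]`. The two fibres come from `f_t(0) = f_w` and `f_t(1) = f`.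
-/

open MvPolynomial

/-- `w(f) = min { w·α : α in the support of f }` (junk value `0` for `f = 0`). -/
noncomputable def wval {m : ℕ} (w : Fin m → ℤ) (f : MvPolynomial (Fin m) ℂ) : ℤ :=
  if h : f.support.Nonempty then f.support.inf' h (fun α => ∑ i, w i * (α i : ℤ)) else 0

/-- The initial form `f_w`: the sum of the terms `c_α x^α` of `f` with `w·α = w(f)`. -/
noncomputable def initialForm {m : ℕ} (w : Fin m → ℤ) (f : MvPolynomial (Fin m) ℂ) :
    MvPolynomial (Fin m) ℂ :=
  ∑ α ∈ f.support.filter (fun α => (∑ i, w i * (α i : ℤ)) = wval w f),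
    monomial α (coeff α f)

/-- `f_t = Σ_α c_α x^α t^(w·α − w(f))`, an element of `ℂ[t][x_0,…,x_{m-1}]`. -/
noncomputable def degenerate {m : ℕ} (w : Fin m → ℤ) (f : MvPolynomial (Fin m) ℂ) :
    MvPolynomial (Fin m) (Polynomial ℂ) :=
  ∑ α ∈ f.support,
    monomial α (Polynomial.C (coeff α f) *
      Polynomial.X ^ ((∑ i, w i * (α i : ℤ)) - wval w f).toNat)

open scoped Polynomial

theorem Submodule.mem_of_forall_sum_coeff_smul_shift_mem {K V : Type*} [Field K] [AddCommGroup V]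
    [Module K V] (P : Submodule K V) {p : K[X]} (hp : p ≠ 0) {u : ℤ → V} {N : ℤ}
    (hN : ∀ d, N < d → u d ∈ P) (h : ∀ d, ∑ j ∈ p.support, p.coeff j • u (d + j) ∈ P) (d : ℤ) :
    u d ∈ P := by
  set j₀ := p.natTrailingDegree
  -- In the relation at `d - j₀`, every term other than `p_{j₀} • u d` has index `> d`.
  have step : ∀ d, (∀ e, d < e → u e ∈ P) → u d ∈ P := by
    intro d hd
    have hrest : ∑ j ∈ p.support.erase j₀, p.coeff j • u (d - j₀ + j) ∈ P := by
      refine P.sum_mem fun j hj => P.smul_mem _ (hd _ ?_)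
      have := Polynomial.natTrailingDegree_le_of_mem_supp j (Finset.mem_of_mem_erase hj)
      have := Finset.ne_of_mem_erase hj
      omega
    have hlead := h (d - j₀)
    rw [← Finset.add_sum_erase _ _ (Polynomial.natTrailingDegree_mem_support_of_nonzero hp),
      P.add_mem_iff_left hrest, sub_add_cancel] at hlead
    exact (P.smul_mem_iff (Polynomial.trailingCoeff_nonzero_iff_nonzero.mpr hp)).mp hlead
  suffices ∀ n : ℕ, ∀ e, N - n < e → u e ∈ P from this (N - d + 1).toNat d (by omega)
  intro n
  induction n with
  | zero => simpa using hN
  | succ n ih => exact fun e he => step e fun e' he' => ih e' (by omega)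

section Components

variable {σ k : Type*} [CommRing k] (w : σ → ℤ)

/-- The weight-`d` part of `F`, where `x^α t^j` has weight `w·α - j`, evaluated at `t = 1`. -/
noncomputable def dehomogenizedComponent (d : ℤ) : MvPolynomial σ k[X] →+ MvPolynomial σ k where
  toFun F := AddMonoidAlgebra.ofCoeff <| Finsupp.onFinset F.support
    (fun α => if d ≤ Finsupp.weight w α then
      (coeff α F).coeff (Finsupp.weight w α - d).toNat else 0)
    fun α h => mem_support_iff.mpr fun hα => h (by simp [hα])
  map_zero' := by ext; simp [coeff]
  map_add' F G := by ext; simp [coeff, ite_add_zero]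

theorem coeff_dehomogenizedComponent (d : ℤ) (F : MvPolynomial σ k[X]) (α : σ →₀ ℕ) :
    coeff α (dehomogenizedComponent w d F) =
      if d ≤ Finsupp.weight w α then (coeff α F).coeff (Finsupp.weight w α - d).toNat else 0 :=
  rfl

/-- The lift `x^α ↦ x^α t^(w·α - d)`; `toNat` truncates the exponent on monomials of weight
below `d`, so this inverts `dehomogenizedComponent w d` only on `g` with all weights `≥ d`. -/
noncomputable def homogenize (d : ℤ) (g : MvPolynomial σ k) : MvPolynomial σ k[X] :=
  AddMonoidAlgebra.ofCoeff <| Finsupp.onFinset g.support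
    (fun α => Polynomial.C (coeff α g) * Polynomial.X ^ (Finsupp.weight w α - d).toNat)
    fun α h => mem_support_iff.mpr fun hα => h (by simp [hα])

theorem coeff_homogenize (d : ℤ) (g : MvPolynomial σ k) (α : σ →₀ ℕ) :
    coeff α (homogenize w d g) =
      Polynomial.C (coeff α g) * Polynomial.X ^ (Finsupp.weight w α - d).toNat :=
  rfl

@[simp] theorem homogenize_zero (d : ℤ) : homogenize w d (0 : MvPolynomial σ k) = 0 := by
  ext1 α
  simp [coeff_homogenize]

theorem map_evalRingHom_one_homogenize (d : ℤ) (g : MvPolynomial σ k) :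
    map (Polynomial.evalRingHom 1) (homogenize w d g) = g := by
  ext1 α
  rw [coeff_map, coeff_homogenize]
  simp

theorem dehomogenizedComponent_C_monomial_mul (d : ℤ) (j : ℕ) (c : k)
    (F : MvPolynomial σ k[X]) :
    dehomogenizedComponent w d (C (Polynomial.monomial j c) * F) =
      c • dehomogenizedComponent w (d + j) F := by
  ext α
  simp only [coeff_dehomogenizedComponent, coeff_C_mul, coeff_smul,
    ← Polynomial.C_mul_X_pow_eq_monomial, mul_assoc, Polynomial.coeff_C_mul,
    Polynomial.coeff_X_pow_mul', smul_eq_mul]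
  split_ifs <;> first | omega | simp | congr 2; omega

theorem dehomogenizedComponent_C_mul (d : ℤ) (p : k[X]) (F : MvPolynomial σ k[X]) :
    dehomogenizedComponent w d (C p * F) =
      ∑ j ∈ p.support, p.coeff j • dehomogenizedComponent w (d + j) F := by
  conv_lhs => rw [p.as_sum_support, map_sum, Finset.sum_mul, map_sum]
  simp only [dehomogenizedComponent_C_monomial_mul]

theorem dehomogenizedComponent_X_mul (d : ℤ) (i : σ) (F : MvPolynomial σ k[X]) :
    dehomogenizedComponent w d (X i * F) = X i * dehomogenizedComponent w (d - w i) F := by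
  classical
  ext α
  simp only [coeff_X_mul', coeff_dehomogenizedComponent]
  by_cases hi : i ∈ α.support
  · have hle : Finsupp.single i 1 ≤ α :=
      Finsupp.single_le_iff.mpr (Nat.one_le_iff_ne_zero.mpr (Finsupp.mem_support_iff.mp hi))
    have hα : Finsupp.weight w (α - Finsupp.single i 1) = Finsupp.weight w α - w i := by
      conv_rhs => rw [← tsub_add_cancel_of_le hle, map_add, Finsupp.weight_single, one_smul]
      ring
    simp only [hi, if_true, hα, sub_sub_sub_cancel_right, sub_le_sub_iff_right]
  · simp [hi]

theorem dehomogenizedComponent_mul_mem {I : Ideal (MvPolynomial σ k)} (c : MvPolynomial σ k[X])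
    {F : MvPolynomial σ k[X]} (hF : ∀ d, dehomogenizedComponent w d F ∈ I) (d : ℤ) :
    dehomogenizedComponent w d (c * F) ∈ I := by
  induction c using MvPolynomial.induction_on generalizing F d with
  | C p =>
    rw [dehomogenizedComponent_C_mul]
    exact I.sum_mem fun j _ => by rw [smul_eq_C_mul]; exact I.mul_mem_left _ (hF _)
  | add c c' hc hc' =>
    rw [add_mul, map_add]
    exact I.add_mem (hc hF d) (hc' hF d)
  | mul_X c i hc =>
    rw [mul_assoc]
    refine hc (fun e => ?_) d
    rw [dehomogenizedComponent_X_mul]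
    exact I.mul_mem_left _ (hF _)

def degenerationIdeal (I : Ideal (MvPolynomial σ k)) : Ideal (MvPolynomial σ k[X]) where
  carrier := {F | ∀ d, dehomogenizedComponent w d F ∈ I}
  add_mem' hF hG d := by
    simpa only [map_add] using I.add_mem (hF d) (hG d)
  zero_mem' d := by simp
  smul_mem' c _ hF := dehomogenizedComponent_mul_mem w c hF

theorem le_weight_of_mem_support_dehomogenizedComponent {d : ℤ} {F : MvPolynomial σ k[X]}
    {α : σ →₀ ℕ} (hα : α ∈ (dehomogenizedComponent w d F).support) : d ≤ Finsupp.weight w α := by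
  rw [mem_support_iff, coeff_dehomogenizedComponent] at hα
  by_contra h
  exact hα (if_neg h)

theorem dehomogenizedComponent_homogenize {e : ℤ} {g : MvPolynomial σ k}
    (hg : ∀ α ∈ g.support, e ≤ Finsupp.weight w α) (d : ℤ) :
    dehomogenizedComponent w d (homogenize w e g) = if d = e then g else 0 := by
  ext α
  rw [coeff_dehomogenizedComponent, coeff_homogenize, Polynomial.coeff_C_mul_X_pow,
    apply_ite (coeff α), coeff_zero]
  by_cases hα : α ∈ g.support
  · have := hg α hα
    split_ifs <;> first | rfl | omega
  · rw [notMem_support_iff.mp hα]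
    simp

noncomputable def weightDegrees (F : MvPolynomial σ k[X]) : Finset ℤ :=
  F.support.biUnion fun α => (coeff α F).support.image fun j : ℕ => Finsupp.weight w α - j

theorem dehomogenizedComponent_eq_zero_of_notMem {d : ℤ} {F : MvPolynomial σ k[X]}
    (hd : d ∉ weightDegrees w F) : dehomogenizedComponent w d F = 0 := by
  ext α
  rw [coeff_dehomogenizedComponent, coeff_zero]
  split_ifs with h
  · by_contra hne
    refine hd (Finset.mem_biUnion.mpr
      ⟨α, ?_, Finset.mem_image.mpr ⟨(Finsupp.weight w α - d).toNat, ?_, by omega⟩⟩)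
    · exact mem_support_iff.mpr fun h0 => hne (by rw [h0, Polynomial.coeff_zero])
    · exact Polynomial.mem_support_iff.mpr hne
  · rfl

theorem sum_homogenize_dehomogenizedComponent (F : MvPolynomial σ k[X]) :
    ∑ d ∈ weightDegrees w F, homogenize w d (dehomogenizedComponent w d F) = F := by
  ext α n
  simp only [coeff_sum, coeff_homogenize, coeff_dehomogenizedComponent,
    Polynomial.finsetSum_coeff, Polynomial.coeff_C_mul_X_pow]
  rw [Finset.sum_congr rfl fun d _ => show _ = if d = Finsupp.weight w α - n
      then (coeff α F).coeff n else 0 by split_ifs <;> first | rfl | omega | congr 1; omega,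
    Finset.sum_ite_eq']
  split_ifs with h
  · rfl
  · by_contra hne
    refine h (Finset.mem_biUnion.mpr ⟨α, ?_, Finset.mem_image.mpr ⟨n, ?_, rfl⟩⟩)
    · exact mem_support_iff.mpr fun h0 => hne (by rw [h0, Polynomial.coeff_zero])
    · exact Polynomial.mem_support_iff.mpr (Ne.symm hne)

end Components

section TorsionFree

variable {σ k : Type*} [Field k] (w : σ → ℤ) (I : Ideal (MvPolynomial σ k))

theorem mem_degenerationIdeal_of_C_mul_mem {p : k[X]} (hp : p ≠ 0) {F : MvPolynomial σ k[X]}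
    (h : C p * F ∈ degenerationIdeal w I) : F ∈ degenerationIdeal w I := by
  obtain ⟨N, hN⟩ := (weightDegrees w F).bddAbove
  refine fun d => (I.restrictScalars k).mem_of_forall_sum_coeff_smul_shift_mem hp
    (u := fun e => dehomogenizedComponent w e F) (N := N) (fun e he => ?_) (fun e => ?_) d
  · rw [dehomogenizedComponent_eq_zero_of_notMem w fun hmem => by have := hN hmem; omega]
    exact zero_mem _
  · rw [Submodule.restrictScalars_mem, ← dehomogenizedComponent_C_mul]
    exact h e

instance : Module.IsTorsionFree k[X] (MvPolynomial σ k[X] ⧸ degenerationIdeal w I) := by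
  refine .of_smul_eq_zero fun p x hx => or_iff_not_imp_left.mpr fun hp => ?_
  obtain ⟨F, rfl⟩ := Ideal.Quotient.mk_surjective x
  change Ideal.Quotient.mk _ (p • F) = 0 at hx
  rw [smul_eq_C_mul, Ideal.Quotient.eq_zero_iff_mem] at hx
  exact Ideal.Quotient.eq_zero_iff_mem.mpr (mem_degenerationIdeal_of_C_mul_mem w I hp hx)

end TorsionFree

section Degeneration

variable {m : ℕ} (w : Fin m → ℤ)

theorem weight_eq_sum_mul (α : Fin m →₀ ℕ) : Finsupp.weight w α = ∑ i, w i * (α i : ℤ) := by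
  simp [Finsupp.weight_eq_sum, mul_comm]

theorem wval_le_weight {f : MvPolynomial (Fin m) ℂ} {α : Fin m →₀ ℕ} (hα : α ∈ f.support) :
    wval w f ≤ Finsupp.weight w α := by
  rw [wval, dif_pos ⟨α, hα⟩, weight_eq_sum_mul]
  exact Finset.inf'_le _ hα

theorem le_wval {f : MvPolynomial (Fin m) ℂ} (hf : f ≠ 0) {e : ℤ}
    (h : ∀ α ∈ f.support, e ≤ Finsupp.weight w α) : e ≤ wval w f := by
  rw [wval, dif_pos (support_nonempty.mpr hf)]
  exact Finset.le_inf' _ _ fun α hα => weight_eq_sum_mul w α ▸ h α hα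

theorem degenerate_eq_homogenize (f : MvPolynomial (Fin m) ℂ) :
    degenerate w f = homogenize w (wval w f) f := by
  ext1 β
  simp only [degenerate, coeff_sum, coeff_monomial, coeff_homogenize, weight_eq_sum_mul]
  rw [Finset.sum_ite_eq']
  split_ifs with hβ
  · rfl
  · simp [notMem_support_iff.mp hβ]

theorem homogenize_eq_C_mul_degenerate {d : ℤ} {g : MvPolynomial (Fin m) ℂ}
    (hg : ∀ α ∈ g.support, d ≤ Finsupp.weight w α) :
    homogenize w d g = C (Polynomial.X ^ (wval w g - d).toNat) * degenerate w g := by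
  ext1 α
  rw [coeff_C_mul, degenerate_eq_homogenize, coeff_homogenize, coeff_homogenize]
  by_cases hα : α ∈ g.support
  · have hd := le_wval w (ne_zero_iff.mpr ⟨α, mem_support_iff.mp hα⟩) hg
    have hw := wval_le_weight w hα
    rw [mul_left_comm, ← pow_add]
    congr 2
    omega
  · simp [notMem_support_iff.mp hα]

theorem span_degenerate_eq_degenerationIdeal (I : Ideal (MvPolynomial (Fin m) ℂ)) :
    Ideal.span {g | ∃ f ∈ I, f ≠ 0 ∧ g = degenerate w f} = degenerationIdeal w I := by
  apply le_antisymm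
  · rw [Ideal.span_le]
    rintro _ ⟨f, hf, -, rfl⟩ d
    rw [degenerate_eq_homogenize, dehomogenizedComponent_homogenize w fun α => wval_le_weight w]
    split_ifs
    · exact hf
    · exact I.zero_mem
  · intro F hF
    rw [← sum_homogenize_dehomogenizedComponent w F]
    refine Ideal.sum_mem _ fun d _ => ?_
    by_cases h0 : dehomogenizedComponent w d F = 0
    · rw [h0, homogenize_zero]
      exact Ideal.zero_mem _
    · rw [homogenize_eq_C_mul_degenerate w
        fun α => le_weight_of_mem_support_dehomogenizedComponent w]
      exact Ideal.mul_mem_left _ _ (Ideal.subset_span ⟨_, hF d, h0, rfl⟩)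

theorem map_evalRingHom_one_degenerate (f : MvPolynomial (Fin m) ℂ) :
    map (Polynomial.evalRingHom 1) (degenerate w f) = f := by
  rw [degenerate_eq_homogenize, map_evalRingHom_one_homogenize]

theorem map_evalRingHom_zero_degenerate (f : MvPolynomial (Fin m) ℂ) :
    map (Polynomial.evalRingHom 0) (degenerate w f) = initialForm w f := by
  ext1 β
  simp only [degenerate_eq_homogenize, initialForm, coeff_map, coeff_homogenize, coeff_sum,
    coeff_monomial, Finset.sum_ite_eq', Finset.mem_filter, ← weight_eq_sum_mul]
  by_cases hβ : β ∈ f.support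
  · have := wval_le_weight w hβ
    by_cases heq : Finsupp.weight w β = wval w f
    · simp [hβ, heq]
    · simp [hβ, heq, zero_pow (show (Finsupp.weight w β - wval w f).toNat ≠ 0 by omega)]
  · simp [hβ, notMem_support_iff.mp hβ]

end Degeneration

theorem Ideal.map_span_setOf_ne_zero {R S T : Type*} [Semiring R] [Semiring S] [Semiring T]
    (φ : S →+* T) (I : Ideal R) (D : R → S) :
    Ideal.map φ (Ideal.span {g | ∃ f ∈ I, f ≠ 0 ∧ g = D f}) =
      Ideal.span {g | ∃ f ∈ I, f ≠ 0 ∧ g = φ (D f)} := by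
  rw [Ideal.map_span]
  congr 1
  ext g
  simp [eq_comm, and_assoc]

theorem weight_degeneration_flat (n : ℕ) (I : Ideal (MvPolynomial (Fin (n + 1)) ℂ))
    (w : Fin (n + 1) → ℤ)
    (J : Ideal (MvPolynomial (Fin (n + 1)) (Polynomial ℂ)))
    (hJ : J = Ideal.span {g | ∃ f ∈ I, f ≠ 0 ∧ g = degenerate w f}) :
    Module.Flat (Polynomial ℂ) (MvPolynomial (Fin (n + 1)) (Polynomial ℂ) ⧸ J) ∧
    Ideal.map (MvPolynomial.map (Polynomial.evalRingHom (0 : ℂ))) J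
      = Ideal.span {g | ∃ f ∈ I, f ≠ 0 ∧ g = initialForm w f} ∧
    Ideal.map (MvPolynomial.map (Polynomial.evalRingHom (1 : ℂ))) J = I := by
  subst hJ
  refine ⟨?_, ?_, ?_⟩
  · rw [span_degenerate_eq_degenerationIdeal]
    -- `ℂ[X]` is a Dedekind domain, over which torsion-free modules are flat.
    infer_instance
  · simp only [Ideal.map_span_setOf_ne_zero, map_evalRingHom_zero_degenerate]
  · have hI : {g | ∃ f ∈ I, f ≠ 0 ∧ g = f} = (I : Set _) \ {0} := by
      ext g
      simp [and_comm]
    simp only [Ideal.map_span_setOf_ne_zero, map_evalRingHom_one_degenerate, hI,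
      Ideal.span_sdiff_singleton_zero, Ideal.span_eq]
end

section
/- In the polynomial ring ℂ[x_1,…,x_6] (with x_1,…,x_6 standing for the variables p_{12}, p_{21}, p_{23}, p_{32}, p_{31}, p_{13}), let P := 3(x_1x_3x_5 − x_2x_4x_6) + x_1x_3x_6 + x_1x_4x_5 + x_2x_3x_5 − x_1x_4x_6 − x_2x_3x_6 − x_2x_4x_5. Then for every weight w ∈ ℤ^6 and every nonzero scalar c ∈ ℂ, the initial form P_w is not equal to c·(x_1x_3x_5 − x_2x_4x_6). (This shows that the quasi-symmetry family for the 3-cycle, whose special fiber is defined by the binomial p_{12}p_{23}p_{31} − p_{21}p_{32}p_{13}, is not a weight degeneration.) -/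
/-!
If `P_w = c (x₀x₂x₄ - x₁x₃x₅)`, both monomials of the binomial have the minimal weight `w(P)`,
while the monomials `x₀x₂x₅` and `x₁x₃x₄` of `P` are missing from `P_w` and so have larger weight.
This is impossible, since `x₀x₂x₅ · x₁x₃x₄ = x₀x₂x₄ · x₁x₃x₅` and weights add up:
the support of an initial form is closed under such exchanges.
-/

open MvPolynomial

/-- The cubic `P` defining the quasi-symmetry family for the 3-cycle at `t = 1`,
with variables `x_0,…,x_5` standing for `p_12, p_21, p_23, p_32, p_31, p_13`. -/
noncomputable def quasiSymmetryCubic : MvPolynomial (Fin 6) ℂ :=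
  3 * (X 0 * X 2 * X 4 - X 1 * X 3 * X 5)
    + X 0 * X 2 * X 5 + X 0 * X 3 * X 4 + X 1 * X 2 * X 4
    - X 0 * X 3 * X 5 - X 1 * X 2 * X 5 - X 1 * X 3 * X 4

section InitialForm

variable {m : ℕ} (w : Fin m → ℤ) (f : MvPolynomial (Fin m) ℂ)

lemma coeff_initialForm (β : Fin m →₀ ℕ) :
    coeff β (initialForm w f) =
      if ∑ i, w i * (β i : ℤ) = wval w f then coeff β f else 0 := by
  rw [initialForm, coeff_sum]
  simp only [coeff_monomial, Finset.sum_ite_eq', Finset.mem_filter, mem_support_iff]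
  by_cases hβ : coeff β f = 0 <;> simp [hβ]

variable {w f}

lemma wval_le_of_mem_support {α : Fin m →₀ ℕ} (hα : α ∈ f.support) :
    wval w f ≤ ∑ i, w i * (α i : ℤ) := by
  rw [wval, dif_pos ⟨α, hα⟩]
  exact Finset.inf'_le _ hα

lemma weight_eq_wval_of_mem_support_initialForm {α : Fin m →₀ ℕ}
    (hα : α ∈ (initialForm w f).support) : ∑ i, w i * (α i : ℤ) = wval w f := by
  rw [mem_support_iff, coeff_initialForm] at hα
  by_contra hne
  exact hα (if_neg hne)

lemma mem_support_initialForm_of_add_eq {α β γ δ : Fin m →₀ ℕ}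
    (hα : α ∈ f.support) (hβ : β ∈ f.support)
    (hγ : γ ∈ (initialForm w f).support) (hδ : δ ∈ (initialForm w f).support)
    (hαβ : α + β = γ + δ) : α ∈ (initialForm w f).support := by
  have hweight : ∑ i, w i * (α i : ℤ) + ∑ i, w i * (β i : ℤ)
      = ∑ i, w i * (γ i : ℤ) + ∑ i, w i * (δ i : ℤ) := by
    simp only [← Finset.sum_add_distrib, ← mul_add, ← Nat.cast_add, ← Finsupp.add_apply, hαβ]
  have hα_eq : ∑ i, w i * (α i : ℤ) = wval w f := by
    linarith [wval_le_of_mem_support (w := w) hα, wval_le_of_mem_support (w := w) hβ,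
      weight_eq_wval_of_mem_support_initialForm hγ,
      weight_eq_wval_of_mem_support_initialForm hδ]
  rw [mem_support_iff, coeff_initialForm, if_pos hα_eq]
  exact mem_support_iff.mp hα

end InitialForm

noncomputable abbrev cubicExponent (i j k : Fin 6) : Fin 6 →₀ ℕ :=
  Finsupp.single i 1 + Finsupp.single j 1 + Finsupp.single k 1

lemma X_mul_X_mul_X (i j k : Fin 6) :
    (X i * X j * X k : MvPolynomial (Fin 6) ℂ) = monomial (cubicExponent i j k) 1 := by
  simp [X, monomial_mul]

lemma coeff_C_mul_binomial (c : ℂ) :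
    coeff (cubicExponent 0 2 4) (C c * (X 0 * X 2 * X 4 - X 1 * X 3 * X 5)) = c ∧
      coeff (cubicExponent 1 3 5) (C c * (X 0 * X 2 * X 4 - X 1 * X 3 * X 5)) = -c ∧
      coeff (cubicExponent 0 2 5) (C c * (X 0 * X 2 * X 4 - X 1 * X 3 * X 5)) = 0 := by
  simp [X_mul_X_mul_X, coeff_monomial, Finsupp.ext_iff, Finsupp.single_apply, Fin.forall_fin_succ]

lemma coeff_quasiSymmetryCubic :
    coeff (cubicExponent 0 2 5) quasiSymmetryCubic = 1 ∧
      coeff (cubicExponent 1 3 4) quasiSymmetryCubic = -1 := by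
  rw [quasiSymmetryCubic, ← map_ofNat C 3]
  simp [coeff_C_mul, X_mul_X_mul_X, coeff_monomial, Finsupp.ext_iff, Finsupp.single_apply,
    Fin.forall_fin_succ]

lemma cubicExponent_exchange :
    cubicExponent 0 2 5 + cubicExponent 1 3 4 = cubicExponent 0 2 4 + cubicExponent 1 3 5 := by
  simp only [cubicExponent]
  abel

theorem quasisymmetry_is_not_a_weight_degeneration :
    ∀ (w : Fin 6 → ℤ) (c : ℂ), c ≠ 0 →
      initialForm w quasiSymmetryCubic ≠ C c * (X 0 * X 2 * X 4 - X 1 * X 3 * X 5) := by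
  intro w c hc h
  obtain ⟨hcoeff024, hcoeff135, hcoeff025⟩ := coeff_C_mul_binomial c
  obtain ⟨hP025, hP134⟩ := coeff_quasiSymmetryCubic
  have h025 := mem_support_initialForm_of_add_eq (w := w)
    (mem_support_iff.mpr (by rw [hP025]; exact one_ne_zero))
    (mem_support_iff.mpr (by rw [hP134]; exact neg_ne_zero.mpr one_ne_zero))
    (by rw [h, mem_support_iff, hcoeff024]; exact hc)
    (by rw [h, mem_support_iff, hcoeff135]; exact neg_ne_zero.mpr hc)
    cubicExponent_exchange
  rw [h, mem_support_iff, hcoeff025] at h025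
  exact h025 rfl
end

section
/- Let 𝒜 : ℤ^{n+1} → ℤ^{d+1} be a surjective group homomorphism and let p ∈ (ℂ^×)^{n+1}. Define φ_{p,𝒜} : (ℂ^×)^{d+1} → (ℂ^×)^{n+1} by (φ_{p,𝒜}(t))_i = p_i · ∏_k t_k^{𝒜_{k,i}}, where 𝒜_{k,i} are the entries of the matrix of 𝒜 (whose i-th column is 𝒜(e_i)). Then the image of φ_{p,𝒜} equals the set { x ∈ (ℂ^×)^{n+1} : x^u = p^u for every u ∈ ker 𝒜 }, where x^u := ∏_i x_i^{u_i} ∈ ℂ^×. (This is the claim that the character equations c_u = p^u for u ∈ ker(𝒜) define 𝒳_0 ∩ 𝕋 as a subvariety of the torus, i.e., they cut out exactly the torus of the translated toric variety p.X_𝒜.) -/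
/-!
Sending `x : ι → G` to the homomorphism `u ↦ x ^ u` identifies `ι → G` with
`Hom(ℤ^ι, G)`, and under this identification the monomial map `t ↦ t ^ 𝒜` is precomposition
with `𝒜`. Its image therefore consists of the homomorphisms that factor through `𝒜`, which for
surjective `𝒜` are exactly those vanishing on `ker 𝒜`. Translating by `p` gives the theorem.
-/

open Finset

section

variable {ι κ G : Type*} [Fintype ι] [Fintype κ] [CommGroup G]

def Pi.prodZPowHom (x : ι → G) : (ι → ℤ) →+ Additive G where
  toFun u := Additive.ofMul (∏ i, x i ^ u i)
  map_zero' := by simp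
  map_add' u v := by simp [zpow_add, prod_mul_distrib]

namespace Pi

lemma prodZPowHom_single [DecidableEq ι] (x : ι → G) (i : ι) :
    prodZPowHom x (single i 1) = Additive.ofMul (x i) := by
  simp [prodZPowHom, single_apply]

lemma prodZPowHom_mul (x y : ι → G) : prodZPowHom (x * y) = prodZPowHom x + prodZPowHom y := by
  ext u
  simp [prodZPowHom, mul_zpow, prod_mul_distrib]

lemma prodZPowHom_inv (x : ι → G) : prodZPowHom x⁻¹ = -prodZPowHom x := by
  ext u
  simp [prodZPowHom]

end Pi

open Pi

variable [DecidableEq ι]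

def monomialMap (A : (ι → ℤ) →+ (κ → ℤ)) (t : κ → G) : ι → G :=
  fun i => (prodZPowHom t (A (single i 1))).toMul

lemma prodZPowHom_monomialMap (A : (ι → ℤ) →+ (κ → ℤ)) (t : κ → G) :
    prodZPowHom (monomialMap A t) = (prodZPowHom t).comp A := by
  ext i
  simp [monomialMap, prodZPowHom_single]

lemma range_monomialMap [DecidableEq κ] {A : (ι → ℤ) →+ (κ → ℤ)}
    (hA : Function.Surjective A) :
    Set.range (monomialMap A : (κ → G) → ι → G) = {x | A.ker ≤ (prodZPowHom x).ker} := by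
  ext x
  constructor
  · rintro ⟨t, rfl⟩ u hu
    simp [prodZPowHom_monomialMap, AddMonoidHom.mem_ker.mp hu]
  · intro hx
    set g := A.liftOfSurjective hA ⟨prodZPowHom x, hx⟩
    have hg : prodZPowHom (fun k => (g (single k 1)).toMul) = g := by
      ext k
      simp [prodZPowHom_single]
    refine ⟨fun k => (g (single k 1)).toMul, funext fun i => ?_⟩
    simp [monomialMap, hg, g, prodZPowHom_single]

theorem range_mul_monomialMap [DecidableEq κ] {A : (ι → ℤ) →+ (κ → ℤ)}
    (hA : Function.Surjective A) (p : ι → G) :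
    Set.range (fun t => p * monomialMap A t) =
      {x | ∀ u, A u = 0 → prodZPowHom x u = prodZPowHom p u} := by
  ext x
  calc x ∈ Set.range (fun t => p * monomialMap A t)
      ↔ p⁻¹ * x ∈ Set.range (monomialMap A) := by simp [eq_inv_mul_iff_mul_eq]
    _ ↔ ∀ u, A u = 0 → prodZPowHom p u = prodZPowHom x u := by
      simp [range_monomialMap hA, SetLike.le_def, prodZPowHom_mul, prodZPowHom_inv,
        neg_add_eq_zero]
    _ ↔ _ := forall_congr' fun _ => imp_congr_right fun _ => eq_comm

end

theorem torus_of_translated_toric_variety_cut_out_by_characters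
    {n d : ℕ} (𝒜 : (Fin (n + 1) → ℤ) →+ (Fin (d + 1) → ℤ))
    (hsurj : Function.Surjective 𝒜) (p : Fin (n + 1) → ℂˣ) :
    Set.range (fun t : Fin (d + 1) → ℂˣ =>
        (fun i => p i * ∏ k, t k ^ 𝒜 (Pi.single i 1) k : Fin (n + 1) → ℂˣ)) =
      {x : Fin (n + 1) → ℂˣ | ∀ u : Fin (n + 1) → ℤ, 𝒜 u = 0 →
        ∏ i, x i ^ u i = ∏ i, p i ^ u i} :=
  range_mul_monomialMap hsurj p
end
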